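/- Let W be a finite-dimensional real inner product space. For every alternating bilinear map T : W × W → W there exists a unique linear map ω : W → so(W) such that ω(x)y − ω(y)x = T(x, y) for all x, y ∈ W. -/

import Mathlib

open RealInnerProductSpace

/-! Uniqueness: the difference `B` of two solutions is symmetric in its two arguments and
skew-adjoint in the last two, and six alternating sign flips give `⟪B x y, z⟫ = -⟪B x y, z⟫`.
Existence: the Koszul formula `⟪ω x y, z⟫ = (⟪T(x, y), z⟫ - ⟪T(y, z), x⟫ + ⟪T(z, x), y⟫) / 2`
defines a solution. -/

namespace AlternatingMap

variable {R M N : Type*} [CommRing R] [AddCommGroup M] [Module R M] [AddCommGroup N] [Module R N]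

theorem map_swap_fin_two (T : M [⋀^Fin 2]→ₗ[R] N) (x y : M) : T ![y, x] = -T ![x, y] := by
  simpa using T.map_swap ![x, y] (i := 0) (j := 1) (by decide)

/-- Linearity in the second slot is transported from the first one by antisymmetry. -/
def toLinearMap₂ (T : M [⋀^Fin 2]→ₗ[R] N) : M →ₗ[R] M →ₗ[R] N :=
  LinearMap.mk₂ R (fun x y => T ![x, y])
    (fun x x' y => T.map_vecCons_add ![y] x x')
    (fun c x y => T.map_vecCons_smul ![y] c x)
    (fun x y y' => by
      rw [T.map_swap_fin_two (y + y'), T.map_swap_fin_two y, T.map_swap_fin_two y',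
        T.map_vecCons_add, neg_add])
    (fun c x y => by
      rw [T.map_swap_fin_two (c • y), T.map_swap_fin_two y, T.map_vecCons_smul, smul_neg])

end AlternatingMap

namespace LinearMap

variable {W : Type*} [NormedAddCommGroup W] [InnerProductSpace ℝ W]

theorem eq_zero_of_skew_of_symm (B : W →ₗ[ℝ] W →ₗ[ℝ] W)
    (hskew : ∀ x u v, ⟪B x u, v⟫ = -⟪u, B x v⟫) (hsymm : ∀ x y, B x y = B y x) : B = 0 := by
  ext x y : 2
  refine ext_inner_right ℝ fun z => ?_
  have h : ⟪B x y, z⟫ = -⟪B x y, z⟫ :=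
    calc ⟪B x y, z⟫ = -⟪y, B x z⟫ := hskew x y z
      _ = -⟪B z x, y⟫ := by rw [hsymm x z, real_inner_comm]
      _ = ⟪x, B z y⟫ := by rw [hskew, neg_neg]
      _ = ⟪B y z, x⟫ := by rw [hsymm z y, real_inner_comm]
      _ = -⟪z, B y x⟫ := hskew y z x
      _ = -⟪B x y, z⟫ := by rw [hsymm y x, real_inner_comm]
  simp only [zero_apply, inner_zero_left]
  linarith

theorem eq_of_skew_of_sub_swap_eq {ω₁ ω₂ : W →ₗ[ℝ] W →ₗ[ℝ] W}
    (h₁ : ∀ x u v, ⟪ω₁ x u, v⟫ = -⟪u, ω₁ x v⟫) (h₂ : ∀ x u v, ⟪ω₂ x u, v⟫ = -⟪u, ω₂ x v⟫)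
    (h : ∀ x y, ω₁ x y - ω₁ y x = ω₂ x y - ω₂ y x) : ω₁ = ω₂ := by
  refine sub_eq_zero.mp (eq_zero_of_skew_of_symm _ (fun x u v => ?_) fun x y => ?_)
  · simp only [sub_apply, inner_sub_left, inner_sub_right, h₁, h₂]
    ring
  · simpa only [sub_apply] using sub_eq_sub_iff_sub_eq_sub.mp (h x y)

variable [FiniteDimensional ℝ W]

/-- The Koszul formula `⟪ω x y, z⟫ = (⟪τ x y, z⟫ - ⟪x, τ y z⟫ + ⟪y, τ z x⟫) / 2`, with the last
two terms turned into vectors by taking adjoints. -/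
noncomputable def koszul (τ : W →ₗ[ℝ] W →ₗ[ℝ] W) : W →ₗ[ℝ] W →ₗ[ℝ] W :=
  LinearMap.mk₂ ℝ (fun x y => (2 : ℝ)⁻¹ • (τ x y - adjoint (τ y) x + adjoint (τ.flip x) y))
    (fun x x' y => by simp only [map_add, add_apply]; module)
    (fun c x y => by simp only [map_smul, smul_apply, smul_add]; module)
    (fun x y y' => by simp only [map_add, add_apply]; module)
    (fun c x y => by simp only [map_smul, smul_apply, smul_add]; module)

theorem inner_koszul_apply (τ : W →ₗ[ℝ] W →ₗ[ℝ] W) (x y z : W) :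
    ⟪koszul τ x y, z⟫ = (⟪τ x y, z⟫ - ⟪x, τ y z⟫ + ⟪y, τ z x⟫) / 2 := by
  simp only [koszul, mk₂_apply, flip_apply, inner_smul_left, inner_add_left, inner_sub_left,
    adjoint_inner_left, map_inv₀, Real.ringHom_apply]
  ring

variable {τ : W →ₗ[ℝ] W →ₗ[ℝ] W}

theorem koszul_skew (hτ : ∀ x y, τ y x = -τ x y) (x u v : W) :
    ⟪koszul τ x u, v⟫ = -⟪u, koszul τ x v⟫ := by
  rw [real_inner_comm _ u, inner_koszul_apply, inner_koszul_apply, hτ v u, hτ u x, hτ v x]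
  simp only [inner_neg_left, inner_neg_right, real_inner_comm]
  ring

theorem koszul_sub_swap (hτ : ∀ x y, τ y x = -τ x y) (x y : W) :
    koszul τ x y - koszul τ y x = τ x y := by
  refine ext_inner_right ℝ fun z => ?_
  rw [inner_sub_left, inner_koszul_apply, inner_koszul_apply, hτ x y, hτ x z, hτ y z]
  simp only [inner_neg_left, inner_neg_right, real_inner_comm]
  ring

end LinearMap

theorem existsUnique_so_valued_solution
    (W : Type*) [NormedAddCommGroup W] [InnerProductSpace ℝ W] [FiniteDimensional ℝ W]
    (T : W [⋀^Fin 2]→ₗ[ℝ] W) :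
    ∃! ω : W →ₗ[ℝ] (W →ₗ[ℝ] W),
      (∀ x u v : W, ⟪ω x u, v⟫ = - ⟪u, ω x v⟫) ∧
      (∀ x y : W, ω x y - ω y x = T ![x, y]) := by
  have hT : ∀ x y, T.toLinearMap₂ y x = -T.toLinearMap₂ x y := T.map_swap_fin_two
  refine ⟨T.toLinearMap₂.koszul, ⟨LinearMap.koszul_skew hT, LinearMap.koszul_sub_swap hT⟩,
    fun ω ⟨hskew, htor⟩ => ?_⟩
  exact LinearMap.eq_of_skew_of_sub_swap_eq hskew (LinearMap.koszul_skew hT) fun x y =>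
    (htor x y).trans (LinearMap.koszul_sub_swap hT x y).symm
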